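/- Let A be a commutative ring, I ⊆ A an ideal, B a commutative ring with a ring homomorphism φ : B → A/I. Then every object (N, g, M) of the iso-comma category of finitely presented modules — consisting of a finitely presented B-module N, a finitely presented A-module M, and an isomorphism g : A/I ⊗_B N ≅ M/IM of A/I-modules — admits an epimorphism from an object of the form (B^n, can, A^n) for some n, where can is the canonical isomorphism A/I ⊗_B B^n ≅ (A/I)^n ≅ A^n/IA^n. -/

import Mathlib

/-!
Lift the images `g (1 ⊗ xᵢ)` of generators `xᵢ` of `N` to elements `mᵢ` of `M`. Since
`1 ⊗ xᵢ` span `A/I ⊗_B N`, the `mᵢ` generate `M` modulo `IM`, so adding finitely many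
elements `wⱼ ∈ IM` yields generators of `M`. Pairing `xᵢ` with `mᵢ` and `0` with `wⱼ` gives
the required surjections, compatible with `g` because `wⱼ` vanishes in `M/IM`.
-/

open TensorProduct Function Submodule

theorem TensorProduct.span_range_one_tmul_eq_top {R S N ι : Type*} [CommSemiring R]
    [CommSemiring S] [Algebra R S] [AddCommMonoid N] [Module R N] {x : ι → N}
    (hx : span R (Set.range x) = ⊤) :
    span S (Set.range fun i => (1 : S) ⊗ₜ[R] x i) = ⊤ := by
  rw [← baseChange_top (R := R) S, ← hx, baseChange_span, ← Set.range_comp]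
  rfl

theorem Submodule.span_range_sup_smul_top_eq_top {A M ι : Type*} [CommRing A] [AddCommGroup M]
    [Module A M] {I : Ideal A} {m : ι → M}
    (hm : span (A ⧸ I) (Set.range fun i => (I • ⊤ : Submodule A M).mkQ (m i)) = ⊤) :
    span A (Set.range m) ⊔ I • ⊤ = ⊤ := by
  rw [sup_comm, ← map_mkQ_eq_top, map_span, ← Set.range_comp, Function.comp_def,
    ← restrictScalars_span A (A ⧸ I) Ideal.Quotient.mk_surjective, hm, restrictScalars_top]

theorem Fin.mem_range_append_left {α : Type*} {k l : ℕ} (a : Fin k → α) (b : Fin l → α)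
    (i : Fin k) :
    a i ∈ Set.range (Fin.append a b) :=
  ⟨Fin.castAdd l i, Fin.append_left a b i⟩

theorem Fin.mem_range_append_right {α : Type*} {k l : ℕ} (a : Fin k → α) (b : Fin l → α)
    (j : Fin l) :
    b j ∈ Set.range (Fin.append a b) :=
  ⟨Fin.natAdd k j, Fin.append_right a b j⟩

theorem Submodule.exists_fin_append_span_eq_top_of_sup_eq_top {R M : Type*} [Semiring R]
    [AddCommMonoid M] [Module R M] [Module.Finite R M] {Q : Submodule R M} {k : ℕ}
    {m : Fin k → M} (h : span R (Set.range m) ⊔ Q = ⊤) :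
    ∃ (l : ℕ) (w : Fin l → M), (∀ j, w j ∈ Q) ∧
      span R (Set.range (Fin.append m w)) = ⊤ := by
  obtain ⟨l, y, hy⟩ := Module.Finite.exists_fin (R := R) (M := M)
  have hy_mem (t : Fin l) : y t ∈ span R (Set.range m) ⊔ Q := h ▸ mem_top
  choose v hv w hw hvw using fun t => mem_sup.mp (hy_mem t)
  refine ⟨l, w, hw, eq_top_iff.mpr (hy ▸ span_le.mpr ?_)⟩
  rintro _ ⟨t, rfl⟩
  rw [← hvw t]
  exact add_mem (span_mono (Set.range_subset_iff.mpr (Fin.mem_range_append_left m w)) (hv t))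
    (subset_span (Fin.mem_range_append_right m w t))

theorem stmt_18 {A B : Type} [CommRing A] [CommRing B] (I : Ideal A)
    [Algebra B (A ⧸ I)]
    (N : Type) [AddCommGroup N] [Module B N] [Module.FinitePresentation B N]
    (M : Type) [AddCommGroup M] [Module A M] [Module.FinitePresentation A M]
    (g : ((A ⧸ I) ⊗[B] N) ≃ₗ[A ⧸ I] (M ⧸ (I • ⊤ : Submodule A M))) :
    ∃ (n : ℕ) (p : (Fin n → B) →ₗ[B] N) (q : (Fin n → A) →ₗ[A] M),
      Surjective p ∧ Surjective q ∧
      ∀ i : Fin n,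
        g ((1 : A ⧸ I) ⊗ₜ[B] p (Pi.single i 1))
          = Submodule.Quotient.mk (q (Pi.single i 1)) := by
  obtain ⟨k, x, hx⟩ := Module.Finite.exists_fin (R := B) (M := N)
  set IM : Submodule A M := I • ⊤
  choose m hm using fun i => IM.mkQ_surjective (g ((1 : A ⧸ I) ⊗ₜ x i))
  have hm_span : span (A ⧸ I) (Set.range fun i => IM.mkQ (m i)) = ⊤ := by
    rw [funext hm, Set.range_comp' g, span_image_linearEquiv, span_range_one_tmul_eq_top hx,
      Submodule.map_top, LinearEquiv.range]
  obtain ⟨l, w, hw, hmw⟩ :=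
    exists_fin_append_span_eq_top_of_sup_eq_top (span_range_sup_smul_top_eq_top hm_span)
  refine ⟨k + l, Fintype.linearCombination B (Fin.append x 0),
    Fintype.linearCombination A (Fin.append m w), ?_, ?_, ?_⟩
  · rw [← LinearMap.range_eq_top, Fintype.range_linearCombination, eq_top_iff, ← hx]
    exact span_mono (Set.range_subset_iff.mpr (Fin.mem_range_append_left x 0))
  · rw [← LinearMap.range_eq_top, Fintype.range_linearCombination, hmw]
  · intro i
    simp only [Fintype.linearCombination_apply_single, one_smul]
    refine Fin.addCases (fun j => ?_) (fun j => ?_) i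
    · rw [Fin.append_left, Fin.append_left, ← hm j, mkQ_apply]
    · rw [Fin.append_right, Fin.append_right, Pi.zero_apply, tmul_zero, map_zero,
        (Quotient.mk_eq_zero _).mpr (hw j)]
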